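/- Let G be a finite connected graph and let {F_1, …, F_k} be a c-partition of E(G). For each i define λ_i : V(G_i) → ℝ≥0 by λ_i(X) = |V(X)| (the number of vertices in the component X of G − F_i) and λ_i' : E(G_i) → ℝ≥0 by λ_i'(XY) = |{xy ∈ E(G) : x ∈ V(X), y ∈ V(Y)}| (the number of edges of G between X and Y), where G_i = G/F_i. Then the (unweighted) Mostar index satisfies Mo(G) = Σ_{i=1}^{k} Mo(G_i, λ_i, λ_i'). -/

import Mathlib

open SimpleGraph

noncomputable section

/-- The Djoković–Winkler relation `Θ` on the edges of a graph `G`: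
edges `e = xy` and `f = ab` are related iff
`d(x,a) + d(y,b) ≠ d(x,b) + d(y,a)`. -/
def theta {V : Type*} (G : SimpleGraph V) (e f : Sym2 V) : Prop :=
  e ∈ G.edgeSet ∧ f ∈ G.edgeSet ∧
    ∃ x y a b : V, e = s(x, y) ∧ f = s(a, b) ∧
      G.dist x a + G.dist y b ≠ G.dist x b + G.dist y a

/-- The quotient graph `G/F`: its vertices are the connected components of
`G − F`, two components being adjacent iff some vertex of one is adjacent in
`G` to some vertex of the other. -/
def quotientGraph {V : Type*} (G : SimpleGraph V) (F : Set (Sym2 V)) :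
    SimpleGraph (G.deleteEdges F).ConnectedComponent where
  Adj X Y := X ≠ Y ∧ ∃ x y : V,
    (G.deleteEdges F).connectedComponentMk x = X ∧
    (G.deleteEdges F).connectedComponentMk y = Y ∧ G.Adj x y
  symm := by
    constructor
    rintro X Y ⟨hne, x, y, hx, hy, hadj⟩
    exact ⟨hne.symm, y, x, hy, hx, hadj.symm⟩
  loopless := by
    constructor
    rintro X ⟨hne, -⟩
    exact hne rfl

/-- `F₁, …, F_k` is a partition of the edge set of `G`. -/
def IsEdgePartition {V : Type*} (G : SimpleGraph V) {k : ℕ}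
    (F : Fin k → Set (Sym2 V)) : Prop :=
  (∀ i, F i ⊆ G.edgeSet) ∧ (∀ e ∈ G.edgeSet, ∃ i, e ∈ F i) ∧
    (∀ i j, i ≠ j → Disjoint (F i) (F j))

/-- `F₁, …, F_k` is a c-partition of the edge set of `G`: a partition such
that every `Θ*`-class (class of the transitive closure of `Θ`) is contained
in some part. -/
def IsCPartition {V : Type*} (G : SimpleGraph V) {k : ℕ}
    (F : Fin k → Set (Sym2 V)) : Prop :=
  IsEdgePartition G F ∧
    ∀ e f : Sym2 V, Relation.TransGen (theta G) e f → ∀ i, e ∈ F i → f ∈ F i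

/-- For an edge `e = uv`, `nW G w u v` is `n_u(e|(G,w))`, the sum of the
weights of the vertices strictly closer to `u` than to `v`. -/
def nW {V : Type*} (G : SimpleGraph V) (w : V → NNReal) (u v : V) : NNReal :=
  ∑ᶠ x ∈ {x : V | G.dist x u < G.dist x v}, w x

/-- The Mostar index of a vertex-edge-weighted graph `(G, w, w')`. -/
def MostarW {V : Type*} (G : SimpleGraph V) (w : V → NNReal)
    (w' : Sym2 V → NNReal) : ℝ :=
  ∑ᶠ e ∈ G.edgeSet, (w' e : ℝ) *
    Sym2.lift ⟨fun u v => |((nW G w u v : ℝ)) - ((nW G w v u : ℝ))|,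
      fun _ _ => abs_sub_comm _ _⟩ e

/-- The (unweighted) Mostar index of a graph `G`. -/
def Mostar {V : Type*} (G : SimpleGraph V) : ℝ :=
  ∑ᶠ e ∈ G.edgeSet,
    Sym2.lift ⟨fun u v =>
      |((Nat.card {x : V | G.dist x u < G.dist x v} : ℝ)) -
        ((Nat.card {x : V | G.dist x v < G.dist x u} : ℝ))|,
      fun _ _ => abs_sub_comm _ _⟩ e

/-!
Write `g_e(x) = d(x,a) - d(x,b)` for a dart `e = (a,b)`; it takes values in `{-1, 0, 1}`, is `-1`
at the start and `1` at the end of every geodesic through `e`, and the change of `g_e` across a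
dart `f` equals the change of `g_f` across `e`. If `F` is Θ-closed and `e ∈ F`, then `g_e` does not
change across edges outside `F`, so along any walk from `x` to `y` its total change is collected on
the `F`-darts. Exchanging the two sums gives, for a geodesic `P` and any walk `W` from `x` to `y`,
`2 |P ∩ F| = ∑_{f ∈ W ∩ F} (g_f(y) - g_f(x)) ≤ 2 |W ∩ F|`; hence the distance in `G/F` is the
number of `F`-edges on a geodesic. The complement of a Θ-closed set is Θ-closed, so
`d_G = d_{G/F} + d_{G/Fᶜ}`, and for `uv ∈ F` the vertices `u, v` lie in one component of
`G - Fᶜ`, so `d(x,u) - d(x,v)` equals the corresponding difference in `G/F`. Thus the vertices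
closer to `u` are those whose component is closer to the component of `u`, and all edges of `F`
between two components contribute the same Mostar term.
-/

section

variable {V : Type*} {G : SimpleGraph V}

lemma finsum_mem_comp_eq_finsum_mem_image {α β M : Type*} [NonAssocSemiring M] {s : Set α}
    (hs : s.Finite) (f : α → β) (h : β → M) :
    ∑ᶠ a ∈ s, h (f a) = ∑ᶠ b ∈ f '' s, (Nat.card {a | a ∈ s ∧ f a = b} : M) * h b := by
  classical
  rw [finsum_mem_eq_finite_toFinset_sum _ hs, finsum_mem_eq_finite_toFinset_sum _ (hs.image f),
    Set.Finite.toFinset_image _ hs, Finset.sum_comp]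
  refine Finset.sum_congr rfl fun b _ => ?_
  rw [nsmul_eq_mul, Nat.card_eq_card_finite_toFinset (hs.subset fun _ ha => ha.1)]
  congr 3
  ext a
  simp

lemma finsum_mem_natCard_fiber {α β : Type*} [Finite α] [Finite β] (f : α → β) (S : Set β) :
    ∑ᶠ b ∈ S, (Nat.card {a | f a = b} : NNReal) = Nat.card (f ⁻¹' S) := by
  have hcard := Finset.card_preimage_eq_sum_card_image_eq (f := f)
    (s := (Set.toFinite S).toFinset) fun _ _ => Set.toFinite _
  rw [Set.Finite.coe_toFinset] at hcard
  rw [finsum_mem_eq_finite_toFinset_sum _ (Set.toFinite S), hcard, Nat.cast_sum]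
  rfl

lemma theta_symm {e f : Sym2 V} (h : theta G e f) : theta G f e := by
  obtain ⟨he, hf, x, y, a, b, rfl, rfl, hne⟩ := h
  refine ⟨hf, he, a, b, x, y, rfl, rfl, ?_⟩
  rw [dist_comm (u := a), dist_comm (u := b), dist_comm (u := a) (v := y),
    dist_comm (u := b) (v := x)]
  omega

namespace SimpleGraph

def Dart.distDiff (d : G.Dart) (x : V) : ℤ := G.dist x d.fst - G.dist x d.snd

open Classical in
def Walk.dartsIn {x y : V} (W : G.Walk x y) (F : Set (Sym2 V)) : List G.Dart :=
  W.darts.filter (·.edge ∈ F)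

namespace Walk

variable {F : Set (Sym2 V)}

@[simp]
lemma dartsIn_nil {x : V} : (nil : G.Walk x x).dartsIn F = [] := rfl

lemma dartsIn_cons_of_mem {u v w : V} (h : G.Adj u v) (p : G.Walk v w) (huv : s(u, v) ∈ F) :
    (cons h p).dartsIn F = ⟨(u, v), h⟩ :: p.dartsIn F := by
  simp [dartsIn, huv]

lemma dartsIn_cons_of_notMem {u v w : V} (h : G.Adj u v) (p : G.Walk v w) (huv : s(u, v) ∉ F) :
    (cons h p).dartsIn F = p.dartsIn F := by
  simp [dartsIn, huv]

lemma dartsIn_append {x y z : V} (p : G.Walk x y) (q : G.Walk y z) :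
    (p.append q).dartsIn F = p.dartsIn F ++ q.dartsIn F := by
  simp [dartsIn, darts_append, List.filter_append]

lemma mem_dartsIn {x y : V} {W : G.Walk x y} {d : G.Dart} :
    d ∈ W.dartsIn F ↔ d ∈ W.darts ∧ d.edge ∈ F := by
  simp [dartsIn]

lemma length_dartsIn_add_length_dartsIn_compl {x y : V} (W : G.Walk x y) :
    (W.dartsIn F).length + (W.dartsIn Fᶜ).length = W.length := by
  classical
  simp only [dartsIn, Set.mem_compl_iff, decide_not]
  rw [← List.length_eq_length_filter_add, length_darts]

lemma dartsIn_mapLe_deleteEdges {x y : V} (p : (G.deleteEdges F).Walk x y) :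
    (p.mapLe (G.deleteEdges_le F)).dartsIn F = [] := by
  refine List.filter_eq_nil_iff.2 fun d hd => ?_
  have hmem : d.edge ∈ p.edges := by
    rw [← edges_mapLe_eq_edges (G.deleteEdges_le F)]
    exact List.mem_map_of_mem hd
  have hdel := p.edges_subset_edgeSet hmem
  rw [edgeSet_deleteEdges] at hdel
  simpa only [decide_eq_true_eq] using hdel.2

end Walk

namespace Dart

lemma abs_distDiff_le_one (d : G.Dart) (x : V) : |d.distDiff x| ≤ 1 := by
  have := d.adj.diff_dist_adj (u := x)
  rw [distDiff, abs_le]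
  omega

lemma distDiff_fst (d : G.Dart) : d.distDiff d.fst = -1 := by
  simp [distDiff, dist_eq_one_iff_adj.2 d.adj]

lemma distDiff_snd (d : G.Dart) : d.distDiff d.snd = 1 := by
  simp [distDiff, dist_eq_one_iff_adj.2 d.adj.symm]

lemma distDiff_sub_comm (d e : G.Dart) :
    d.distDiff e.snd - d.distDiff e.fst = e.distDiff d.snd - e.distDiff d.fst := by
  simp only [distDiff, dist_comm (u := e.fst), dist_comm (u := e.snd)]
  ring

lemma distDiff_eq_of_mem_darts {x y : V} {P : G.Walk x y} (hP : P.length = G.dist x y)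
    {d : G.Dart} (hd : d ∈ P.darts) : d.distDiff x = -1 ∧ d.distDiff y = 1 := by
  obtain ⟨p, q, rfl⟩ := (Walk.isSubwalk_toWalk_adj_iff_mem_darts P).2 hd
  simp only [Walk.length_append, Walk.length_cons, Walk.length_nil] at hP
  -- `P = p ++ d ++ q` is a geodesic, so every triangle inequality below is tight.
  have := dist_le p
  have := dist_le q
  have := d.adj.reachable.dist_triangle_right x
  have := d.adj.reachable.dist_triangle_left y
  have := q.reachable.dist_triangle_right x
  have := p.reachable.dist_triangle_left y
  rw [dist_eq_one_iff_adj.2 d.adj] at *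
  simp only [distDiff, dist_comm (u := y)]
  omega


lemma theta_of_distDiff_ne {d e : G.Dart} (h : d.distDiff e.fst ≠ d.distDiff e.snd) :
    theta G d.edge e.edge := by
  refine ⟨d.edge_mem, e.edge_mem, d.fst, d.snd, e.fst, e.snd, rfl, rfl, fun h' => h ?_⟩
  simp only [distDiff, dist_comm (v := d.fst), dist_comm (v := d.snd)]
  omega

end Dart

end SimpleGraph

def IsThetaClosed (G : SimpleGraph V) (F : Set (Sym2 V)) : Prop :=
  ∀ ⦃e f⦄, theta G e f → e ∈ F → f ∈ F

namespace IsThetaClosed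

variable {F : Set (Sym2 V)} (hF : IsThetaClosed G F)
include hF

lemma compl : IsThetaClosed G Fᶜ :=
  fun _ _ h he hf => he (hF (theta_symm h) hf)

lemma distDiff_eq {d e : G.Dart} (hd : d.edge ∈ F) (he : e.edge ∉ F) :
    d.distDiff e.fst = d.distDiff e.snd := by
  by_contra h
  exact he (hF (Dart.theta_of_distDiff_ne h) hd)

lemma sum_dartsIn_distDiff {d : G.Dart} (hd : d.edge ∈ F) {x y : V} (W : G.Walk x y) :
    ((W.dartsIn F).map fun e => d.distDiff e.snd - d.distDiff e.fst).sum
      = d.distDiff y - d.distDiff x := by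
  induction W with
  | nil => simp
  | @cons u v w h p ih =>
    by_cases huv : s(u, v) ∈ F
    · rw [Walk.dartsIn_cons_of_mem h p huv, List.map_cons, List.sum_cons, ih]
      ring
    · rw [Walk.dartsIn_cons_of_notMem h p huv, ih,
        hF.distDiff_eq hd (e := ⟨(u, v), h⟩) huv]

lemma sum_dartsIn_distDiff_comm {x y a b : V} (P : G.Walk x y) (W : G.Walk a b) :
    ((P.dartsIn F).map fun d => d.distDiff b - d.distDiff a).sum
      = ((W.dartsIn F).map fun e => e.distDiff y - e.distDiff x).sum := by
  calc ((P.dartsIn F).map fun d => d.distDiff b - d.distDiff a).sum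
      = ((P.dartsIn F).map fun d =>
          ((W.dartsIn F).map fun e => d.distDiff e.snd - d.distDiff e.fst).sum).sum := by
        refine congrArg _ (List.map_congr_left fun d hd => ?_)
        rw [hF.sum_dartsIn_distDiff (Walk.mem_dartsIn.1 hd).2]
    _ = ((W.dartsIn F).map fun e =>
          ((P.dartsIn F).map fun d => d.distDiff e.snd - d.distDiff e.fst).sum).sum := by
        exact_mod_cast Multiset.sum_map_sum_map (P.dartsIn F : Multiset G.Dart)
          (W.dartsIn F : Multiset G.Dart)
    _ = ((W.dartsIn F).map fun e => e.distDiff y - e.distDiff x).sum := by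
        refine congrArg _ (List.map_congr_left fun e he => ?_)
        simp only [Dart.distDiff_sub_comm _ e]
        rw [hF.sum_dartsIn_distDiff (Walk.mem_dartsIn.1 he).2]

lemma length_dartsIn_le {x y : V} {P : G.Walk x y} (hP : P.length = G.dist x y)
    (W : G.Walk x y) : (P.dartsIn F).length ≤ (W.dartsIn F).length := by
  have hP2 : ((P.dartsIn F).map fun d => d.distDiff y - d.distDiff x).sum
      = 2 * (P.dartsIn F).length := by
    rw [List.map_congr_left (g := fun _ => 2) fun d hd => ?_]
    · simp [mul_comm]
    · obtain ⟨hx, hy⟩ := Dart.distDiff_eq_of_mem_darts hP (Walk.mem_dartsIn.1 hd).1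
      omega
  have hW2 : ((W.dartsIn F).map fun e => e.distDiff y - e.distDiff x).sum
      ≤ 2 * (W.dartsIn F).length := by
    refine (List.sum_le_card_nsmul _ 2 ?_).trans_eq (by simp [mul_comm])
    simp only [List.mem_map]
    rintro _ ⟨e, -, rfl⟩
    have := abs_le.1 (e.abs_distDiff_le_one x)
    have := abs_le.1 (e.abs_distDiff_le_one y)
    omega
  have := hF.sum_dartsIn_distDiff_comm P W
  omega

lemma connectedComponentMk_ne {u v : V} (h : G.Adj u v) (huv : s(u, v) ∈ F) :
    (G.deleteEdges F).connectedComponentMk u ≠ (G.deleteEdges F).connectedComponentMk v := by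
  intro hmk
  obtain ⟨p⟩ := ConnectedComponent.exact hmk
  have := hF.sum_dartsIn_distDiff (d := ⟨(u, v), h⟩) huv (p.mapLe (G.deleteEdges_le F))
  rw [Walk.dartsIn_mapLe_deleteEdges, Dart.distDiff_fst, Dart.distDiff_snd] at this
  simp at this

end IsThetaClosed

section QuotientWalks

variable {F : Set (Sym2 V)}

lemma connectedComponentMk_deleteEdges_eq {u v : V} (h : G.Adj u v) (huv : s(u, v) ∉ F) :
    (G.deleteEdges F).connectedComponentMk u = (G.deleteEdges F).connectedComponentMk v :=
  ConnectedComponent.connectedComponentMk_eq_of_adj ((deleteEdges_adj ..).2 ⟨h, huv⟩)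

lemma exists_walk_quotientGraph_length_le {x y : V} (W : G.Walk x y) :
    ∃ Q : (quotientGraph G F).Walk ((G.deleteEdges F).connectedComponentMk x)
      ((G.deleteEdges F).connectedComponentMk y), Q.length ≤ (W.dartsIn F).length := by
  induction W with
  | nil => exact ⟨.nil, by simp⟩
  | @cons a c y h p ih =>
    obtain ⟨Q, hQ⟩ := ih
    by_cases hac : s(a, c) ∈ F
    · rw [Walk.dartsIn_cons_of_mem h p hac, List.length_cons]
      by_cases hmk : (G.deleteEdges F).connectedComponentMk a
          = (G.deleteEdges F).connectedComponentMk c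
      · exact ⟨Q.copy hmk.symm rfl, by simp only [Walk.length_copy]; omega⟩
      · have hadj : (quotientGraph G F).Adj _ _ := ⟨hmk, a, c, rfl, rfl, h⟩
        exact ⟨.cons hadj Q, by simp only [Walk.length_cons]; omega⟩
    · rw [Walk.dartsIn_cons_of_notMem h p hac]
      exact ⟨Q.copy (connectedComponentMk_deleteEdges_eq h hac).symm rfl,
        by simpa only [Walk.length_copy] using hQ⟩

lemma exists_walk_length_dartsIn_le {X Y : (G.deleteEdges F).ConnectedComponent}
    (Q : (quotientGraph G F).Walk X Y) {x y : V}
    (hx : (G.deleteEdges F).connectedComponentMk x = X)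
    (hy : (G.deleteEdges F).connectedComponentMk y = Y) :
    ∃ W : G.Walk x y, (W.dartsIn F).length ≤ Q.length := by
  induction Q generalizing x with
  | nil =>
    obtain ⟨p⟩ := ConnectedComponent.exact (hx.trans hy.symm)
    exact ⟨p.mapLe (G.deleteEdges_le F), by simp [Walk.dartsIn_mapLe_deleteEdges]⟩
  | cons hXZ Q ih =>
    obtain ⟨-, a, b, ha, hb, hab⟩ := id hXZ
    obtain ⟨p⟩ := ConnectedComponent.exact (hx.trans ha.symm)
    obtain ⟨W, hW⟩ := ih hb hy
    refine ⟨(p.mapLe (G.deleteEdges_le F)).append (.cons hab W), ?_⟩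
    rw [Walk.dartsIn_append, Walk.dartsIn_mapLe_deleteEdges, List.nil_append, Walk.length_cons]
    by_cases hab' : s(a, b) ∈ F
    · rw [Walk.dartsIn_cons_of_mem hab W hab', List.length_cons]
      omega
    · rw [Walk.dartsIn_cons_of_notMem hab W hab']
      omega

lemma mem_of_map_mem_edgeSet_quotientGraph {e : Sym2 V} (he : e ∈ G.edgeSet)
    (hmap : Sym2.map (G.deleteEdges F).connectedComponentMk e ∈ (quotientGraph G F).edgeSet) :
    e ∈ F := by
  induction e using Sym2.ind with
  | _ a b =>
    by_contra hab
    rw [Sym2.map_mk, mem_edgeSet, connectedComponentMk_deleteEdges_eq he hab] at hmap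
    exact hmap.ne rfl

end QuotientWalks

def mostarOn (G : SimpleGraph V) (F : Set (Sym2 V)) : ℝ :=
  ∑ᶠ e ∈ F, Sym2.lift ⟨fun u v =>
      |((Nat.card {x : V | G.dist x u < G.dist x v} : ℝ)) -
        ((Nat.card {x : V | G.dist x v < G.dist x u} : ℝ))|,
      fun _ _ => abs_sub_comm _ _⟩ e

namespace IsThetaClosed

variable {F : Set (Sym2 V)} (hF : IsThetaClosed G F)
include hF

lemma dist_quotientGraph_eq {x y : V} {P : G.Walk x y} (hP : P.length = G.dist x y) :
    (quotientGraph G F).dist ((G.deleteEdges F).connectedComponentMk x)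
      ((G.deleteEdges F).connectedComponentMk y) = (P.dartsIn F).length := by
  obtain ⟨Q, hQ⟩ := exists_walk_quotientGraph_length_le (F := F) P
  obtain ⟨Q', hQ'⟩ := Q.reachable.exists_walk_length_eq_dist
  obtain ⟨W, hW⟩ := exists_walk_length_dartsIn_le Q' rfl rfl
  refine le_antisymm ((dist_le Q).trans hQ) ?_
  rw [← hQ']
  exact (hF.length_dartsIn_le hP W).trans hW

lemma dist_eq_add_dist_compl (hG : G.Connected) (x y : V) :
    G.dist x y = (quotientGraph G F).dist ((G.deleteEdges F).connectedComponentMk x)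
        ((G.deleteEdges F).connectedComponentMk y)
      + (quotientGraph G Fᶜ).dist ((G.deleteEdges Fᶜ).connectedComponentMk x)
        ((G.deleteEdges Fᶜ).connectedComponentMk y) := by
  obtain ⟨P, hP⟩ := hG.exists_walk_length_eq_dist x y
  rw [hF.dist_quotientGraph_eq hP, hF.compl.dist_quotientGraph_eq hP,
    P.length_dartsIn_add_length_dartsIn_compl, hP]

lemma dist_sub_dist_eq (hG : G.Connected) {u v : V} (h : G.Adj u v) (huv : s(u, v) ∈ F)
    (x : V) :
    (G.dist x u : ℤ) - G.dist x v
      = ((quotientGraph G F).dist ((G.deleteEdges F).connectedComponentMk x)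
          ((G.deleteEdges F).connectedComponentMk u) : ℤ)
        - (quotientGraph G F).dist ((G.deleteEdges F).connectedComponentMk x)
          ((G.deleteEdges F).connectedComponentMk v) := by
  have hmk := connectedComponentMk_deleteEdges_eq h (Set.notMem_compl_iff.2 huv)
  rw [hF.dist_eq_add_dist_compl hG x u, hF.dist_eq_add_dist_compl hG x v, hmk]
  push_cast
  ring

lemma edgeSet_quotientGraph (hFE : F ⊆ G.edgeSet) :
    (quotientGraph G F).edgeSet = Sym2.map (G.deleteEdges F).connectedComponentMk '' F := by
  ext E
  constructor
  · intro hE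
    induction E using Sym2.ind with
    | _ X Y =>
      obtain ⟨-, x, y, rfl, rfl, hxy⟩ := id hE
      exact ⟨s(x, y), mem_of_map_mem_edgeSet_quotientGraph hxy hE, Sym2.map_mk ..⟩
  · rintro ⟨e, he, rfl⟩
    induction e using Sym2.ind with
    | _ a b =>
      have hab : G.Adj a b := hFE he
      exact ⟨hF.connectedComponentMk_ne hab he, a, b, rfl, rfl, hab⟩

lemma nW_quotientGraph [Finite V] (hG : G.Connected) {u v : V} (h : G.Adj u v)
    (huv : s(u, v) ∈ F) :
    nW (quotientGraph G F)
        (fun X => (Nat.card {x : V | (G.deleteEdges F).connectedComponentMk x = X} : NNReal))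
        ((G.deleteEdges F).connectedComponentMk u) ((G.deleteEdges F).connectedComponentMk v)
      = Nat.card {x : V | G.dist x u < G.dist x v} := by
  rw [nW, finsum_mem_natCard_fiber]
  congr 3
  ext x
  have := hF.dist_sub_dist_eq hG h huv x
  simp only [Set.mem_preimage, Set.mem_ofPred_eq]
  omega

lemma mostarOn_eq_MostarW [Finite V] (hG : G.Connected) (hFE : F ⊆ G.edgeSet) :
    mostarOn G F = MostarW (quotientGraph G F)
      (fun X => (Nat.card {x : V | (G.deleteEdges F).connectedComponentMk x = X} : NNReal))
      (fun E => (Nat.card {e : Sym2 V | e ∈ G.edgeSet ∧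
          Sym2.map ((G.deleteEdges F).connectedComponentMk) e = E} : NNReal)) := by
  have hfiber : ∀ E ∈ (quotientGraph G F).edgeSet,
      {e : Sym2 V | e ∈ G.edgeSet ∧ Sym2.map (G.deleteEdges F).connectedComponentMk e = E}
        = {e | e ∈ F ∧ Sym2.map (G.deleteEdges F).connectedComponentMk e = E} := by
    refine fun E hE => Set.ext fun e => ⟨fun ⟨he, hmap⟩ => ⟨?_, hmap⟩, fun ⟨he, hmap⟩ =>
      ⟨hFE he, hmap⟩⟩
    exact mem_of_map_mem_edgeSet_quotientGraph he (hmap ▸ hE)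
  rw [MostarW, finsum_mem_congr rfl fun E hE => by rw [hfiber E hE, NNReal.coe_natCast],
    hF.edgeSet_quotientGraph hFE, ← finsum_mem_comp_eq_finsum_mem_image (Set.toFinite F),
    mostarOn]
  refine finsum_mem_congr rfl fun e he => ?_
  induction e using Sym2.ind with
  | _ u v =>
    have h : G.Adj u v := hFE he
    simp only [Sym2.lift_mk, Sym2.map_mk, hF.nW_quotientGraph hG h he,
      hF.nW_quotientGraph hG h.symm (Sym2.eq_swap ▸ he), NNReal.coe_natCast]

end IsThetaClosed

end

/-- the Mostar index of a finite connected graph `G` equals the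
sum over a c-partition `{F₁, …, F_k}` of the weighted Mostar indices of the
quotient graphs `(G_i, λ_i, λ_i')`, where `λ_i(X)` is the number of vertices
of the component `X` and `λ_i'(XY)` is the number of edges of `G` between the
components `X` and `Y`. -/
theorem mostar_eq_sum_quotients {V : Type*} [Fintype V] (G : SimpleGraph V)
    (hG : G.Connected) {k : ℕ} (F : Fin k → Set (Sym2 V))
    (hF : IsCPartition G F) :
    Mostar G = ∑ i : Fin k,
      MostarW (quotientGraph G (F i))
        (fun X => (Nat.card {x : V |
            (G.deleteEdges (F i)).connectedComponentMk x = X} : NNReal))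
        (fun E => (Nat.card {e : Sym2 V | e ∈ G.edgeSet ∧
            Sym2.map ((G.deleteEdges (F i)).connectedComponentMk) e = E} :
          NNReal)) := by
  obtain ⟨⟨hFE, hcover, hdisj⟩, hclosed⟩ := hF
  have hE : G.edgeSet = ⋃ i, F i :=
    Set.Subset.antisymm (fun e he => Set.mem_iUnion.2 (hcover e he)) (Set.iUnion_subset hFE)
  have hθ (i : Fin k) : IsThetaClosed G (F i) := fun e f h he => hclosed e f (.single h) i he
  calc Mostar G = mostarOn G (⋃ i, F i) := by rw [← hE]; rfl
    _ = ∑ i, mostarOn G (F i) := by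
      rw [mostarOn, finsum_mem_iUnion hdisj fun i => Set.toFinite _, finsum_eq_sum_of_fintype]
      rfl
    _ = _ := Finset.sum_congr rfl fun i _ => (hθ i).mostarOn_eq_MostarW hG (hFE i)
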